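/- Minimal half-integer representations and the scaling dimension: Let 2c be a positive integer and ω, α ∈ ℤ. Consider all tuples (β_1, …, β_{2c}) with each β_j ∈ ℤ + ½ and Σ_{j=1}^{2c} β_j = c + ω − α (such tuples exist). Then the minimum value of Σ_{j=1}^{2c} β_j² over all such tuples equals 2 Δ_α(c,ω). -/

import Mathlib

/-- The critical scaling dimension `Δ_α(c,ω) = c(1/4 + x² − (x − [x])²)` with
`x = (α − ω − c)/(2c)`, where `c = c2/2` and `[x]` is the nearest integer to `x`
(half-integers rounded up, which is Mathlib's `round`). -/
noncomputable def scalingDim (c2 : ℕ) (ω α : ℤ) : ℝ :=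
  ((c2 : ℝ) / 2) *
    (1 / 4 + (((α : ℝ) - (ω : ℝ) - (c2 : ℝ) / 2) / (c2 : ℝ)) ^ 2 -
      ((((α : ℝ) - (ω : ℝ) - (c2 : ℝ) / 2) / (c2 : ℝ)) -
        (round (((α : ℝ) - (ω : ℝ) - (c2 : ℝ) / 2) / (c2 : ℝ)) : ℤ)) ^ 2)

/-!
Every half-integer `β` satisfies `β² ≥ 2kβ - (k² - 1/4)` for each integer `k`, with equality
exactly when `β = k ± 1/2`, since the difference `(β - k)² - 1/4` is a product of two consecutive
integers. Summing over the tuple bounds `Σ β_j²` from below by `2kS - 2c(k² - 1/4)`, where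
`S = c + ω - α`. For `k = -[x]` this bound is `2Δ_α(c,ω)`, and `|x - [x]| ≤ 1/2` says exactly that
`S` lies between `2c(k - 1/2)` and `2c(k + 1/2)`, so a tuple with entries `k ± 1/2` attains it.
-/

lemma Int.mul_add_one_nonneg (d : ℤ) : 0 ≤ d * (d + 1) := by
  rcases le_or_gt 0 d with h | h <;> nlinarith

lemma sq_add_half_sub_tangent (b k : ℤ) :
    ((b : ℝ) + 1 / 2) ^ 2 - (2 * k * ((b : ℝ) + 1 / 2) - ((k : ℝ) ^ 2 - 1 / 4)) =
      ((b - k) * (b - k + 1) : ℤ) := by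
  push_cast; ring

lemma tangent_le_sq_add_half (b k : ℤ) :
    2 * k * ((b : ℝ) + 1 / 2) - ((k : ℝ) ^ 2 - 1 / 4) ≤ ((b : ℝ) + 1 / 2) ^ 2 := by
  have h := sq_add_half_sub_tangent b k
  have : (0 : ℝ) ≤ ((b - k) * (b - k + 1) : ℤ) := by exact_mod_cast Int.mul_add_one_nonneg _
  linarith

lemma sq_add_half_eq_tangent {b k : ℤ} (hb : b = k - 1 ∨ b = k) :
    ((b : ℝ) + 1 / 2) ^ 2 = 2 * k * ((b : ℝ) + 1 / 2) - ((k : ℝ) ^ 2 - 1 / 4) := by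
  have h := sq_add_half_sub_tangent b k
  have : (b - k) * (b - k + 1) = 0 := by rcases hb with rfl | rfl <;> ring
  rw [this, Int.cast_zero] at h
  linarith

section Sums

variable {ι : Type*} [Fintype ι]

lemma sum_tangent_le_sum_sq_add_half (b : ι → ℤ) (k : ℤ) :
    2 * k * ∑ j, ((b j : ℝ) + 1 / 2) - Fintype.card ι * ((k : ℝ) ^ 2 - 1 / 4) ≤
      ∑ j, ((b j : ℝ) + 1 / 2) ^ 2 := by
  rw [Finset.mul_sum, ← nsmul_eq_mul, ← Finset.card_univ, ← Finset.sum_const,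
    ← Finset.sum_sub_distrib]
  exact Finset.sum_le_sum fun j _ => tangent_le_sq_add_half (b j) k

lemma sum_sq_add_half_eq_tangent {b : ι → ℤ} {k : ℤ} (hb : ∀ j, b j = k - 1 ∨ b j = k) :
    ∑ j, ((b j : ℝ) + 1 / 2) ^ 2 =
      2 * k * ∑ j, ((b j : ℝ) + 1 / 2) - Fintype.card ι * ((k : ℝ) ^ 2 - 1 / 4) := by
  rw [Finset.mul_sum, ← nsmul_eq_mul, ← Finset.card_univ, ← Finset.sum_const,
    ← Finset.sum_sub_distrib]
  exact Finset.sum_congr rfl fun j _ => sq_add_half_eq_tangent (hb j)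

lemma sum_add_half (b : ι → ℤ) :
    ∑ j, ((b j : ℝ) + 1 / 2) = ((∑ j, b j : ℤ) : ℝ) + Fintype.card ι / 2 := by
  rw [Finset.sum_add_distrib, Finset.sum_const, Finset.card_univ, nsmul_eq_mul]
  push_cast; ring

end Sums

lemma exists_sum_eq_of_mul_sub_one_le_of_le_mul {n : ℕ} {k m : ℤ} (hlo : n * (k - 1) ≤ m)
    (hhi : m ≤ n * k) : ∃ b : Fin n → ℤ, ∑ j, b j = m ∧ ∀ j, b j = k - 1 ∨ b j = k := by
  obtain ⟨t, ht⟩ : ∃ t : ℕ, (t : ℤ) = m - n * (k - 1) := ⟨_, Int.toNat_of_nonneg (by linarith)⟩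
  refine ⟨fun j => k - 1 + if (j : ℕ) < t then 1 else 0, ?_,
    fun j => by dsimp only; split_ifs <;> simp⟩
  have htn : t ≤ n := by
    have : (t : ℤ) ≤ n := by rw [ht, mul_sub, mul_one]; linarith
    exact_mod_cast this
  rw [Finset.sum_add_distrib, Finset.sum_const, Finset.sum_boole, Fin.card_filter_val_lt,
    min_eq_right htn, Finset.card_univ, Fintype.card_fin, nsmul_eq_mul, ht]
  ring

/-- The `k = -[x]` of a minimizing tuple, whose entries all lie in `{k - 1/2, k + 1/2}`. -/
noncomputable def scalingLevel (c2 : ℕ) (ω α : ℤ) : ℤ :=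
  -round (((α : ℝ) - (ω : ℝ) - (c2 : ℝ) / 2) / (c2 : ℝ))

lemma two_mul_scalingDim {c2 : ℕ} (hc2 : 0 < c2) (ω α : ℤ) :
    2 * scalingDim c2 ω α = 2 * scalingLevel c2 ω α * ((c2 : ℝ) / 2 + ω - α) -
      c2 * ((scalingLevel c2 ω α : ℝ) ^ 2 - 1 / 4) := by
  have hx := div_mul_cancel₀ ((α : ℝ) - ω - c2 / 2) (by positivity : (c2 : ℝ) ≠ 0)
  unfold scalingDim scalingLevel
  generalize ((α : ℝ) - ω - c2 / 2) / c2 = x at hx ⊢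
  push_cast
  linear_combination (2 * (round x : ℝ)) * hx

lemma scalingLevel_bounds {c2 : ℕ} (hc2 : 0 < c2) (ω α : ℤ) :
    c2 * (scalingLevel c2 ω α - 1) ≤ ω - α ∧ ω - α ≤ c2 * scalingLevel c2 ω α := by
  have hx := div_mul_cancel₀ ((α : ℝ) - ω - c2 / 2) (by positivity : (c2 : ℝ) ≠ 0)
  have hpos : (0 : ℝ) < c2 := by exact_mod_cast hc2
  unfold scalingLevel
  generalize ((α : ℝ) - ω - c2 / 2) / c2 = x at hx ⊢
  obtain ⟨hlo, hhi⟩ := abs_le.mp (abs_sub_round x)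
  constructor
  · have : ((c2 * (-round x - 1) : ℤ) : ℝ) ≤ ((ω - α : ℤ) : ℝ) := by
      push_cast; nlinarith
    exact_mod_cast this
  · have : ((ω - α : ℤ) : ℝ) ≤ ((c2 * -round x : ℤ) : ℝ) := by
      push_cast; nlinarith
    exact_mod_cast this

theorem minimal_half_integer_representations
    (c2 : ℕ) (hc2 : 0 < c2) (ω α : ℤ) :
    IsLeast
      {S : ℝ | ∃ b : Fin c2 → ℤ,
        (∑ j, ((b j : ℝ) + 1 / 2)) = (c2 : ℝ) / 2 + (ω : ℝ) - (α : ℝ) ∧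
        S = ∑ j, ((b j : ℝ) + 1 / 2) ^ 2}
      (2 * scalingDim c2 ω α) := by
  rw [two_mul_scalingDim hc2]
  refine ⟨?_, ?_⟩
  · obtain ⟨hlo, hhi⟩ := scalingLevel_bounds hc2 ω α
    obtain ⟨b, hsum, hb⟩ := exists_sum_eq_of_mul_sub_one_le_of_le_mul hlo hhi
    have hsum' : ∑ j, ((b j : ℝ) + 1 / 2) = (c2 : ℝ) / 2 + ω - α := by
      rw [sum_add_half, hsum, Fintype.card_fin]; push_cast; ring
    refine ⟨b, hsum', ?_⟩
    rw [sum_sq_add_half_eq_tangent hb, hsum', Fintype.card_fin]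
  · rintro _ ⟨b, hsum, rfl⟩
    have h := sum_tangent_le_sum_sq_add_half b (scalingLevel c2 ω α)
    rwa [hsum, Fintype.card_fin] at h
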